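/- arXiv:1507.01061 — 6 statements merged into one kernel-verified Lean document; each statement's English description precedes it below -/
import Mathlib

section
/- Let C > 0. There exists a constant C' > 0 depending only on C such that for every convex element K(a,b,ã,b̃) (i.e. a,b,ã,b̃ > 0 with ã/a + b̃/b > 1) the following two implications hold: (i) if ã/a ≤ C, b̃/b ≤ C and sin α ≥ 1/C (conditions (Δ1) and (D2) with constant C), then |l| ≤ C'·s and sin α ≥ 1/C' (conditions (Δ2) and (D2) with constant C'); (ii) if |l| ≤ C·s and sin α ≥ 1/C (conditions (Δ2) and (D2) with constant C), then ã/a ≤ C', b̃/b ≤ C' and sin α ≥ 1/C' (conditions (Δ1) and (D2) with constant C'). In other words, the pairs of conditions [Δ1, D2] and [Δ2, D2] are equivalent on convex elements K(a,b,ã,b̃). -/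
noncomputable section

/-- The Euclidean plane. -/
abbrev E2 := EuclideanSpace ℝ (Fin 2)

/-- The point (x, y) of the Euclidean plane. -/
def pt2 (x y : ℝ) : E2 := WithLp.toLp 2 ![x, y]

/-- Length of the side `l` joining `V3 = (ta, tb)` and `V4 = (0, b)` of `K(a,b,ta,tb)`. -/
def lenl (b ta tb : ℝ) : ℝ := Real.sqrt (ta ^ 2 + (b - tb) ^ 2)

/-- The minimum of the four side lengths of `K(a,b,ta,tb)`. -/
def sideMin (a b ta tb : ℝ) : ℝ :=
  min (min a b) (min (lenl b ta tb) (Real.sqrt ((a - ta) ^ 2 + tb ^ 2)))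

/-- The sine of the interior angle α at `V4 = (0,b)` of the triangle with vertices
`V2 = (a,0)`, `V3 = (ta,tb)`, `V4 = (0,b)`. -/
def sinAlpha (a b ta tb : ℝ) : ℝ :=
  Real.sin (EuclideanGeometry.angle (pt2 a 0) (pt2 0 b) (pt2 ta tb))

/-!
Twice the area of the triangle `V2 V3 V4` is `b·ta + a·tb − a·b`, and it equals
`sin α · |V2V4| · |l|` with `|V2V4| = √(a² + b²) ≥ max a b`. Under (Δ1) this area is `O(a b)`, so
(D2) forces `|l| = O(min a b)`; it is also at most `|V2V4| · |V2V3|`, so (D2) gives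
`|l| = O(|V2V3|)`. Conversely, under (Δ2) the coordinate bounds `ta ≤ |l|` and `tb ≤ b + |l|`
give (Δ1), while (D2) only loses a constant.
-/

open scoped RealInnerProductSpace

lemma pt2_sub_pt2 (x y z w : ℝ) : pt2 x y - pt2 z w = pt2 (x - z) (y - w) := by
  ext i; fin_cases i <;> simp [pt2]

lemma inner_pt2_pt2 (x y z w : ℝ) : ⟪pt2 x y, pt2 z w⟫ = x * z + y * w := by
  simp only [pt2, PiLp.inner_apply, RCLike.inner_apply, Real.ringHom_apply, Fin.sum_univ_two,
    Fin.isValue, Matrix.cons_val_zero, Matrix.cons_val_one, Matrix.cons_val_fin_one]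
  ring

lemma norm_pt2 (x y : ℝ) : ‖pt2 x y‖ = √(x ^ 2 + y ^ 2) := by
  simp [EuclideanSpace.norm_eq, Fin.sum_univ_two, pt2]

lemma sin_angle_pt2_mul (x y z w : ℝ) :
    Real.sin (InnerProductGeometry.angle (pt2 x y) (pt2 z w)) *
      (√(x ^ 2 + y ^ 2) * √(z ^ 2 + w ^ 2)) = |x * w - y * z| := by
  rw [← norm_pt2, ← norm_pt2, InnerProductGeometry.sin_angle_mul_norm_mul_norm,
    inner_pt2_pt2, inner_pt2_pt2, inner_pt2_pt2, ← Real.sqrt_sq_eq_abs]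
  congr 1
  ring

lemma abs_mul_sub_mul_le (x y z w : ℝ) :
    |x * w - y * z| ≤ √(x ^ 2 + y ^ 2) * √(z ^ 2 + w ^ 2) := by
  rw [← sin_angle_pt2_mul]
  exact mul_le_of_le_one_left (by positivity) (Real.sin_le_one _)

lemma sinAlpha_mul (a b ta tb : ℝ) :
    sinAlpha a b ta tb * (√(a ^ 2 + b ^ 2) * lenl b ta tb) = |b * ta + a * tb - a * b| := by
  have hangle : EuclideanGeometry.angle (pt2 a 0) (pt2 0 b) (pt2 ta tb)
      = InnerProductGeometry.angle (pt2 a (-b)) (pt2 ta (tb - b)) := by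
    simp only [EuclideanGeometry.angle, vsub_eq_sub, pt2_sub_pt2, sub_zero, zero_sub]
  rw [sinAlpha, hangle, lenl, show a ^ 2 + b ^ 2 = a ^ 2 + (-b) ^ 2 by ring,
    show ta ^ 2 + (b - tb) ^ 2 = ta ^ 2 + (tb - b) ^ 2 by ring, sin_angle_pt2_mul]
  congr 1
  ring

lemma abs_twice_area_le (a b ta tb : ℝ) :
    |b * ta + a * tb - a * b| ≤ √(a ^ 2 + b ^ 2) * √((a - ta) ^ 2 + tb ^ 2) := by
  have h := abs_mul_sub_mul_le a (-b) (ta - a) tb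
  rwa [show a * tb - -b * (ta - a) = b * ta + a * tb - a * b by ring, neg_sq,
    show (ta - a) ^ 2 = (a - ta) ^ 2 by ring] at h

lemma mul_lt_of_one_lt_div_add_div {a b ta tb : ℝ} (ha : 0 < a) (hb : 0 < b)
    (h : 1 < ta / a + tb / b) : a * b < b * ta + a * tb := by
  rwa [div_add_div _ _ ha.ne' hb.ne', one_lt_div (by positivity), mul_comm ta b] at h

lemma mul_lenl_le_of_one_div_le_sinAlpha {C a b ta tb : ℝ} (hC : 0 < C)
    (hsin : 1 / C ≤ sinAlpha a b ta tb) :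
    √(a ^ 2 + b ^ 2) * lenl b ta tb ≤ C * |b * ta + a * tb - a * b| := by
  rw [← sinAlpha_mul, ← mul_assoc]
  have hdl : 0 ≤ √(a ^ 2 + b ^ 2) * lenl b ta tb := by unfold lenl; positivity
  have hCsin : 1 ≤ C * sinAlpha a b ta tb := by rwa [div_le_iff₀' hC] at hsin
  exact le_mul_of_one_le_left hdl hCsin

lemma lenl_le_mul_sideMin_of_delta1_D2 {C a b ta tb : ℝ} (hC : 0 < C) (ha : 0 < a)
    (hb : 0 < b) (hconv : a * b < b * ta + a * tb) (hta : ta ≤ C * a) (htb : tb ≤ C * b)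
    (hsin : 1 / C ≤ sinAlpha a b ta tb) :
    lenl b ta tb ≤ (2 * C ^ 2 + C + 1) * sideMin a b ta tb := by
  set d := √(a ^ 2 + b ^ 2)
  set L := lenl b ta tb
  set r := √((a - ta) ^ 2 + tb ^ 2)
  have hd : 0 < d := by positivity
  have hL : 0 ≤ L := Real.sqrt_nonneg _
  have hda : a ≤ d := Real.le_sqrt_of_sq_le (by nlinarith)
  have hdb : b ≤ d := Real.le_sqrt_of_sq_le (by nlinarith)
  have harea : |b * ta + a * tb - a * b| = b * ta + a * tb - a * b := abs_of_pos (by linarith)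
  have hdL := mul_lenl_le_of_one_div_le_sinAlpha hC hsin
  have hdr := abs_twice_area_le a b ta tb
  rw [harea] at hdL hdr
  have harea_le : b * ta + a * tb - a * b ≤ 2 * C * (a * b) := by nlinarith
  have hLa : L ≤ 2 * C ^ 2 * a :=
    le_of_mul_le_mul_left (by nlinarith [mul_le_mul_of_nonneg_left hdb ha.le]) hd
  have hLb : L ≤ 2 * C ^ 2 * b :=
    le_of_mul_le_mul_left (by nlinarith [mul_le_mul_of_nonneg_left hda hb.le]) hd
  have hLr : L ≤ C * r := le_of_mul_le_mul_left (by nlinarith) hd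
  rw [sideMin, mul_min_of_nonneg _ _ (by positivity), mul_min_of_nonneg _ _ (by positivity),
    mul_min_of_nonneg _ _ (by positivity)]
  refine le_min (le_min ?_ ?_) (le_min ?_ ?_) <;> nlinarith

lemma le_mul_of_lenl_le_mul_sideMin {C a b ta tb : ℝ} (hC : 0 ≤ C)
    (h : lenl b ta tb ≤ C * sideMin a b ta tb) : ta ≤ C * a ∧ tb ≤ (C + 1) * b := by
  have hsa : C * sideMin a b ta tb ≤ C * a :=
    mul_le_mul_of_nonneg_left ((min_le_left _ _).trans (min_le_left _ _)) hC
  have hsb : C * sideMin a b ta tb ≤ C * b :=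
    mul_le_mul_of_nonneg_left ((min_le_left _ _).trans (min_le_right _ _)) hC
  have hta : |ta| ≤ lenl b ta tb := Real.abs_le_sqrt (by nlinarith [sq_nonneg (b - tb)])
  have htb : |b - tb| ≤ lenl b ta tb := Real.abs_le_sqrt (by nlinarith [sq_nonneg ta])
  constructor
  · linarith [le_abs_self ta]
  · linarith [neg_abs_le (b - tb)]

/-- The pairs of conditions [Δ1, D2] and [Δ2, D2] are equivalent on convex elements
`K(a,b,ta,tb)`, with constants depending only on each other. -/
theorem delta1_D2_iff_delta2_D2 (C : ℝ) (hC : 0 < C) :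
    ∃ C' : ℝ, 0 < C' ∧
      ∀ a b ta tb : ℝ, 0 < a → 0 < b → 0 < ta → 0 < tb →
        1 < ta / a + tb / b →
        ((ta / a ≤ C ∧ tb / b ≤ C ∧ 1 / C ≤ sinAlpha a b ta tb) →
          (lenl b ta tb ≤ C' * sideMin a b ta tb ∧ 1 / C' ≤ sinAlpha a b ta tb)) ∧
        ((lenl b ta tb ≤ C * sideMin a b ta tb ∧ 1 / C ≤ sinAlpha a b ta tb) →
          (ta / a ≤ C' ∧ tb / b ≤ C' ∧ 1 / C' ≤ sinAlpha a b ta tb)) := by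
  refine ⟨2 * C ^ 2 + C + 1, by positivity, fun a b ta tb ha hb _ _ hconv => ?_⟩
  have hC1 : C + 1 ≤ 2 * C ^ 2 + C + 1 := by nlinarith
  have hsin_mono : 1 / (2 * C ^ 2 + C + 1) ≤ 1 / C :=
    one_div_le_one_div_of_le hC (by linarith)
  constructor
  · rintro ⟨hta, htb, hsin⟩
    rw [div_le_iff₀ ha] at hta
    rw [div_le_iff₀ hb] at htb
    exact ⟨lenl_le_mul_sideMin_of_delta1_D2 hC ha hb (mul_lt_of_one_lt_div_add_div ha hb hconv)
      hta htb hsin, hsin_mono.trans hsin⟩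
  · rintro ⟨hl, hsin⟩
    obtain ⟨hta, htb⟩ := le_mul_of_lenl_le_mul_sideMin hC.le hl
    refine ⟨?_, ?_, hsin_mono.trans hsin⟩
    · rw [div_le_iff₀ ha]; nlinarith
    · rw [div_le_iff₀ hb]; nlinarith
end
end

section
/- Let C > 0. There exists C' > 0 depending only on C such that for every convex element K(a,b,ã,b̃) satisfying conditions (Δ1) and (D2) with constant C, either b̃/b ≥ 1/2, or the following holds: ã/a ≥ 1/2, the element K(b,a,b̃,ã) is the image of K(a,b,ã,b̃) under the isometric reflection (x,y) ↦ (y,x) of ℝ², and K(b,a,b̃,ã) is a convex element satisfying conditions (Δ1) and (D2) with constant C'. Consequently every convex element under [Δ1, D2] is the image under a rigid motion of a convex element under [Δ1, D2] (with comparable constants) whose ratio b̃/b is at least 1/2. -/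
/-!
The reflection `(x, y) ↦ (y, x)` carries `K(a,b,ta,tb)` onto `K(b,a,tb,ta)` and the triangle
`V2 V3 V4` onto the triangle of the swapped element, so condition (D2) for the swapped element
asks for a lower bound on the sine of the angle at `V2 = (a,0)`. If `tb/b < 1/2`, convexity forces
`ta/a > 1/2`, and then the side `V2 V3` is no longer than `V3 V4`. By the law of sines the angle at
`V2` then has a sine at least `sin α`, so one may take `C' = C`.
-/

noncomputable section

/-- The quadrilateral `K(a,b,ta,tb)` with vertices `(0,0), (a,0), (ta,tb), (0,b)`. -/
def quadK (a b ta tb : ℝ) : Set E2 :=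
  convexHull ℝ {pt2 0 0, pt2 a 0, pt2 ta tb, pt2 0 b}

/-- The isometric reflection `(x, y) ↦ (y, x)` of the plane. -/
def swapMap (X : E2) : E2 := WithLp.toLp 2 ![X 1, X 0]

open EuclideanGeometry

lemma swapMap_pt2 (x y : ℝ) : swapMap (pt2 x y) = pt2 y x := by
  ext i; fin_cases i <;> rfl

def swapIsometry : E2 →ₗᵢ[ℝ] E2 where
  toFun := swapMap
  map_add' x y := by ext i; fin_cases i <;> rfl
  map_smul' c x := by ext i; fin_cases i <;> rfl
  norm_map' x := by
    simp only [LinearMap.coe_mk, AddHom.coe_mk, EuclideanSpace.norm_eq, Fin.sum_univ_two]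
    simp [swapMap, add_comm]

lemma swapMap_image_quadK (a b ta tb : ℝ) :
    swapMap '' quadK a b ta tb = quadK b a tb ta := by
  change swapIsometry.toLinearMap '' _ = _
  rw [quadK, quadK, LinearMap.image_convexHull]
  congr 1
  simp only [Set.image_insert_eq, Set.image_singleton]
  simp only [swapIsometry, LinearMap.coe_mk, AddHom.coe_mk, swapMap_pt2]
  ext z
  simp only [Set.mem_insert_iff, Set.mem_singleton_iff]
  tauto

lemma sinAlpha_swap (a b ta tb : ℝ) :
    sinAlpha b a tb ta = Real.sin (∠ (pt2 0 b) (pt2 a 0) (pt2 ta tb)) := by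
  rw [sinAlpha, ← swapIsometry.toAffineIsometry.angle_map]
  simp [swapIsometry, swapMap_pt2]

lemma dist_pt2_sq (x y x' y' : ℝ) :
    dist (pt2 x y) (pt2 x' y') ^ 2 = (x - x') ^ 2 + (y - y') ^ 2 := by
  rw [EuclideanSpace.dist_eq, Real.sq_sqrt (by positivity), Fin.sum_univ_two]
  simp [pt2, Real.dist_eq, sq_abs]

lemma dist_pt2_le_dist_pt2 {a b ta tb : ℝ} (ha : 0 ≤ a) (hta : a ≤ 2 * ta) (htb : 0 ≤ tb)
    (htb' : 2 * tb ≤ b) :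
    dist (pt2 a 0) (pt2 ta tb) ≤ dist (pt2 ta tb) (pt2 0 b) := by
  rw [← pow_le_pow_iff_left₀ dist_nonneg dist_nonneg two_ne_zero, dist_pt2_sq, dist_pt2_sq]
  nlinarith

lemma sinAlpha_le_sinAlpha_swap {a b ta tb : ℝ} (ha : 0 ≤ a) (hta : a ≤ 2 * ta) (htb : 0 < tb)
    (htb' : 2 * tb ≤ b) :
    sinAlpha a b ta tb ≤ sinAlpha b a tb ta := by
  have law_sin : sinAlpha b a tb ta * dist (pt2 a 0) (pt2 ta tb)
      = sinAlpha a b ta tb * dist (pt2 ta tb) (pt2 0 b) := by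
    rw [sinAlpha_swap, sin_angle_mul_dist_eq_sin_angle_mul_dist, sinAlpha, angle_comm]
  have hpos : 0 < dist (pt2 a 0) (pt2 ta tb) := by
    exact dist_pos.2 fun h => htb.ne (congrArg (fun p : E2 => p 1) h)
  have hsin : 0 ≤ sinAlpha a b ta tb := InnerProductGeometry.sin_angle_nonneg _ _
  refine le_of_mul_le_mul_right ?_ hpos
  rw [law_sin]
  exact mul_le_mul_of_nonneg_left (dist_pt2_le_dist_pt2 ha hta htb.le htb') hsin

/-- Every convex element `K(a,b,ta,tb)` under [Δ1, D2] with constant `C` either has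
`tb/b ≥ 1/2`, or the swapped element `K(b,a,tb,ta)` — the image of `K(a,b,ta,tb)` under the
reflection `(x,y) ↦ (y,x)` — is a convex element under [Δ1, D2] with a constant `C'`
depending only on `C`, and moreover `ta/a ≥ 1/2`. -/
theorem reflect_to_large_tb (C : ℝ) (hC : 0 < C) :
    ∃ C' : ℝ, 0 < C' ∧
      ∀ a b ta tb : ℝ, 0 < a → 0 < b → 0 < ta → 0 < tb →
        1 < ta / a + tb / b →
        ta / a ≤ C → tb / b ≤ C →
        1 / C ≤ sinAlpha a b ta tb →
        (1 / 2 ≤ tb / b) ∨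
          (1 / 2 ≤ ta / a ∧
            swapMap '' quadK a b ta tb = quadK b a tb ta ∧
            1 < tb / b + ta / a ∧
            tb / b ≤ C' ∧ ta / a ≤ C' ∧
            1 / C' ≤ sinAlpha b a tb ta) := by
  refine ⟨C, hC, fun a b ta tb ha hb hta htb hconv hΔa hΔb hα => ?_⟩
  rcases le_or_gt (1 / 2) (tb / b) with h | h
  · exact Or.inl h
  have hta' : 1 / 2 ≤ ta / a := by linarith
  have hta2 : a ≤ 2 * ta := by rw [le_div_iff₀ ha] at hta'; linarith
  have htb2 : 2 * tb ≤ b := by rw [div_lt_iff₀ hb] at h; linarith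
  exact Or.inr ⟨hta', swapMap_image_quadK a b ta tb, by linarith, hΔb, hΔa,
    hα.trans (sinAlpha_le_sinAlpha_swap ha.le hta2 htb htb2)⟩
end
end

section
/- Let B : ℝ² → ℝ² be an invertible linear map and let w₁, w₂ be nonzero vectors in ℝ². Let α ∈ [0,π] be the angle between w₁ and w₂, let ᾱ ∈ [0,π] be the angle between B w₁ and B w₂, and let κ(B) = ‖B‖·‖B⁻¹‖ (operator norms). Then (2/(κ(B)·π))·α ≤ ᾱ ≤ π·(1 − 2/(κ(B)·π)) + (2/(κ(B)·π))·α. -/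
/-!
The quantity `‖x‖‖y‖ - ⟪x, y⟫ = ‖x‖‖y‖ (1 - cos ∠(x, y))` is the minimum over `s, t > 0` of
`‖s • x - t • y‖² / (2st)`, attained at `s = ‖y‖`, `t = ‖x‖`. Applying `B⁻¹` to the minimiser for
`(B x, B y)` therefore gives `1 - cos α ≤ κ(B)² (1 - cos ᾱ)`. Since `1 - cos θ = 2 sin² (θ/2)`, Jordan's
inequality `(2/π) θ ≤ sin θ ≤ θ` on `[0, π/2]` turns this into `(2/(κ(B)π)) α ≤ ᾱ`. The upper bound
is the lower bound for the pair `(w₁, -w₂)`, whose angles are `π - α` and `π - ᾱ`.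
-/

noncomputable section

open Real

open InnerProductGeometry
open scoped RealInnerProductSpace

theorem two_div_mul_pi_mul_le_of_one_sub_cos_le {k a b : ℝ} (hk : 0 < k) (ha₀ : 0 ≤ a)
    (ha : a ≤ π) (hb : 0 ≤ b) (h : 1 - cos a ≤ k ^ 2 * (1 - cos b)) : 2 / (k * π) * a ≤ b := by
  have hsin : |sin (a / 2)| ≤ k * |sin (b / 2)| := by
    rw [abs_sin_half, abs_sin_half, ← Real.sqrt_sq hk.le, ← Real.sqrt_mul (sq_nonneg k)]
    gcongr
    linarith
  have hjordan : 2 / π * (a / 2) ≤ sin (a / 2) := mul_le_sin (by linarith) (by linarith)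
  have hsin_b : |sin (b / 2)| ≤ b / 2 := by
    simpa only [abs_of_nonneg (by linarith : (0 : ℝ) ≤ b / 2)] using abs_sin_le_abs (x := b / 2)
  have hab : a / π ≤ k * (b / 2) := by
    calc a / π = 2 / π * (a / 2) := by ring
      _ ≤ |sin (a / 2)| := hjordan.trans (le_abs_self _)
      _ ≤ k * |sin (b / 2)| := hsin
      _ ≤ k * (b / 2) := by gcongr
  rw [div_le_iff₀ pi_pos] at hab
  rw [div_mul_eq_mul_div, div_le_iff₀ (by positivity)]
  linarith

section

variable {E F : Type*} [NormedAddCommGroup E] [InnerProductSpace ℝ E]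
  [NormedAddCommGroup F] [InnerProductSpace ℝ F]

def ContinuousLinearEquiv.condNum (B : E ≃L[ℝ] F) : ℝ := ‖(B : E →L[ℝ] F)‖ * ‖(B.symm : F →L[ℝ] E)‖

theorem ContinuousLinearEquiv.one_le_condNum [Nontrivial E] (B : E ≃L[ℝ] F) : 1 ≤ B.condNum :=
  B.one_le_norm_mul_norm_symm

theorem norm_smul_sub_smul_sq (x y : E) {s t : ℝ} (hs : 0 ≤ s) (ht : 0 ≤ t) :
    ‖s • x - t • y‖ ^ 2 = 2 * s * t * (‖x‖ * ‖y‖ - ⟪x, y⟫) + (s * ‖x‖ - t * ‖y‖) ^ 2 := by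
  rw [norm_sub_sq_real, norm_smul, norm_smul, real_inner_smul_left, real_inner_smul_right,
    Real.norm_of_nonneg hs, Real.norm_of_nonneg ht]
  ring

theorem ContinuousLinearMap.norm_mul_norm_sub_inner_le (T : E →L[ℝ] F) {x y : E}
    (hx : x ≠ 0) (hy : y ≠ 0) :
    ‖T x‖ * ‖T y‖ - ⟪T x, T y⟫ ≤ ‖T‖ ^ 2 * (‖x‖ * ‖y‖ - ⟪x, y⟫) := by
  have hs := norm_pos_iff.2 hy
  have ht := norm_pos_iff.2 hx
  set z := ‖y‖ • x - ‖x‖ • y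
  have hz : ‖z‖ ^ 2 = 2 * ‖y‖ * ‖x‖ * (‖x‖ * ‖y‖ - ⟪x, y⟫) := by
    rw [norm_smul_sub_smul_sq x y hs.le ht.le, mul_comm ‖y‖ ‖x‖, sub_self]
    ring
  have hTz : 2 * ‖y‖ * ‖x‖ * (‖T x‖ * ‖T y‖ - ⟪T x, T y⟫) ≤ ‖T z‖ ^ 2 := by
    rw [map_sub, map_smul, map_smul, norm_smul_sub_smul_sq _ _ hs.le ht.le]
    exact le_add_of_nonneg_right (sq_nonneg _)
  have hTz_le : ‖T z‖ ^ 2 ≤ ‖T‖ ^ 2 * ‖z‖ ^ 2 := by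
    rw [← mul_pow]
    exact pow_le_pow_left₀ (norm_nonneg _) (T.le_opNorm z) 2
  rw [hz] at hTz_le
  exact le_of_mul_le_mul_left ((hTz.trans hTz_le).trans_eq (by ring)) (by positivity)

theorem one_sub_cos_angle_le_condNum_sq_mul (B : E ≃L[ℝ] F) {x y : E} (hx : x ≠ 0) (hy : y ≠ 0) :
    1 - cos (angle x y) ≤ B.condNum ^ 2 * (1 - cos (angle (B x) (B y))) := by
  set M := ‖(B : E →L[ℝ] F)‖
  set N := ‖(B.symm : F →L[ℝ] E)‖
  have hxy : 0 < ‖x‖ * ‖y‖ := by positivity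
  have hBx : B x ≠ 0 := B.map_ne_zero_iff.2 hx
  have hBy : B y ≠ 0 := B.map_ne_zero_iff.2 hy
  have hBxy : 0 < ‖B x‖ * ‖B y‖ := by positivity
  have hsymm := (B.symm : F →L[ℝ] E).norm_mul_norm_sub_inner_le hBx hBy
  simp only [ContinuousLinearEquiv.coe_coe, ContinuousLinearEquiv.symm_apply_apply] at hsymm
  have hgap : 0 ≤ ‖B x‖ * ‖B y‖ - ⟪B x, B y⟫ := sub_nonneg.2 (real_inner_le_norm _ _)
  have hM : ‖B x‖ * ‖B y‖ ≤ M ^ 2 * (‖x‖ * ‖y‖) := by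
    rw [sq, mul_mul_mul_comm]
    exact mul_le_mul ((B : E →L[ℝ] F).le_opNorm x) ((B : E →L[ℝ] F).le_opNorm y)
      (norm_nonneg _) (by positivity)
  rw [cos_angle, cos_angle, one_sub_div hxy.ne', one_sub_div hBxy.ne', div_le_iff₀ hxy]
  calc ‖x‖ * ‖y‖ - ⟪x, y⟫
      ≤ N ^ 2 * (‖B x‖ * ‖B y‖ - ⟪B x, B y⟫) := hsymm
    _ ≤ N ^ 2 * ((‖B x‖ * ‖B y‖ - ⟪B x, B y⟫) / (‖B x‖ * ‖B y‖) * (M ^ 2 * (‖x‖ * ‖y‖))) := by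
        gcongr
        rw [div_mul_eq_mul_div, le_div_iff₀ hBxy]
        exact mul_le_mul_of_nonneg_left hM hgap
    _ = B.condNum ^ 2 * ((‖B x‖ * ‖B y‖ - ⟪B x, B y⟫) / (‖B x‖ * ‖B y‖)) * (‖x‖ * ‖y‖) := by
        rw [ContinuousLinearEquiv.condNum]
        ring

theorem two_div_condNum_mul_pi_mul_angle_le (B : E ≃L[ℝ] F) {x y : E} (hx : x ≠ 0) (hy : y ≠ 0) :
    2 / (B.condNum * π) * angle x y ≤ angle (B x) (B y) :=
  have : Nontrivial E := nontrivial_of_ne x 0 hx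
  two_div_mul_pi_mul_le_of_one_sub_cos_le (zero_lt_one.trans_le B.one_le_condNum)
    (angle_nonneg x y) (angle_le_pi x y) (angle_nonneg _ _)
    (one_sub_cos_angle_le_condNum_sq_mul B hx hy)

end

/-- For an invertible linear map `B` of the plane with condition number
`κ(B) = ‖B‖·‖B⁻¹‖`, the angle `ᾱ` between the images of two nonzero vectors is related
to the angle `α` between the vectors by
`(2/(κ(B)π))·α ≤ ᾱ ≤ π·(1 − 2/(κ(B)π)) + (2/(κ(B)π))·α`. -/
theorem angle_distortion (B : E2 ≃L[ℝ] E2) (w₁ w₂ : E2) (hw₁ : w₁ ≠ 0) (hw₂ : w₂ ≠ 0) :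
    (2 / ((‖(B : E2 →L[ℝ] E2)‖ * ‖(B.symm : E2 →L[ℝ] E2)‖) * π)) *
        InnerProductGeometry.angle w₁ w₂ ≤
      InnerProductGeometry.angle (B w₁) (B w₂) ∧
    InnerProductGeometry.angle (B w₁) (B w₂) ≤
      π * (1 - 2 / ((‖(B : E2 →L[ℝ] E2)‖ * ‖(B.symm : E2 →L[ℝ] E2)‖) * π)) +
        (2 / ((‖(B : E2 →L[ℝ] E2)‖ * ‖(B.symm : E2 →L[ℝ] E2)‖) * π)) *
          InnerProductGeometry.angle w₁ w₂ := by
  have hlower := two_div_condNum_mul_pi_mul_angle_le B hw₁ hw₂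
  have hupper := two_div_condNum_mul_pi_mul_angle_le B hw₁ (neg_ne_zero.2 hw₂)
  rw [map_neg, angle_neg_right, angle_neg_right] at hupper
  rw [ContinuousLinearEquiv.condNum] at hlower hupper
  exact ⟨hlower, by linear_combination hupper⟩
end
end

section
/- Let C > 0 and p ≥ 1. There exists a constant C' > 0 depending only on C and p such that for every convex element K(a,b,ã,b̃) satisfying conditions (D1) and (D2) with constant C: max{ a/b^{p−1}, b/a^{p−1} } · I_p(a,b,ã,b̃) ≤ C' · h / |l|^{p−1}. -/
noncomputable section

/-- The quantity `I_p(a,b,ta,tb)`. -/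
def Ip (p a b ta tb : ℝ) : ℝ :=
  ∫ z in (Set.Icc (0:ℝ) 1) ×ˢ (Set.Icc (0:ℝ) 1),
    (1 + z.1 * (tb / b - 1) + z.2 * (ta / a - 1)) ^ (-(p - 1))

/-!
Write `s = ta/a + tb/b - 1 > 0`. Under (D1) both coefficients of the integrand of `I_p` are
nonpositive, so its base is smallest at the corner `(1,1)`, where it equals `s`; hence
`I_p ≤ s^{-(p-1)}`. Twice the area of the triangle `V2 V3 V4` is `a b s = |V2V4| |l| sin α`,
so (D2) gives `s ≥ |V2V4| |l| / (C a b)`. Since `a, b ≤ |V2V4| ≤ h`, this yields the bound with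
`C' = C^{p-1}`.
-/

open scoped RealInnerProductSpace
open MeasureTheory

lemma sinAlpha_mul_sqrt_mul_lenl (a b ta tb : ℝ) :
    sinAlpha a b ta tb * (√(a ^ 2 + b ^ 2) * lenl b ta tb) = |a * tb + b * ta - a * b| := by
  have hu : ‖pt2 a 0 - pt2 0 b‖ = √(a ^ 2 + b ^ 2) := by
    simp [EuclideanSpace.norm_eq, pt2, Fin.sum_univ_two]
  have hv : ‖pt2 ta tb - pt2 0 b‖ = lenl b ta tb := by
    rw [EuclideanSpace.norm_eq, lenl]
    congr 1
    simp [pt2, Fin.sum_univ_two]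
    ring
  rw [sinAlpha, EuclideanGeometry.angle, vsub_eq_sub, vsub_eq_sub, ← hu, ← hv,
    InnerProductGeometry.sin_angle_mul_norm_mul_norm, ← Real.sqrt_sq_eq_abs]
  congr 1
  simp [-inner_self_eq_norm_sq_to_K, pt2, PiLp.inner_apply, Fin.sum_univ_two]
  ring

lemma sqrt_mul_lenl_le_of_inv_le_sinAlpha {a b ta tb C : ℝ} (hC : 0 < C) (ha : 0 < a)
    (hb : 0 < b) (hconv : 1 < ta / a + tb / b) (hD2 : 1 / C ≤ sinAlpha a b ta tb) :
    √(a ^ 2 + b ^ 2) * lenl b ta tb ≤ C * (a * b * (ta / a + tb / b - 1)) := by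
  have hcross : a * tb + b * ta - a * b = a * b * (ta / a + tb / b - 1) := by
    field_simp
    ring
  have hs : 0 < ta / a + tb / b - 1 := sub_pos.2 hconv
  rw [← abs_of_pos (by positivity : 0 < a * b * (ta / a + tb / b - 1)), ← hcross,
    ← sinAlpha_mul_sqrt_mul_lenl, ← mul_assoc]
  have hNM : 0 ≤ √(a ^ 2 + b ^ 2) * lenl b ta tb := by unfold lenl; positivity
  calc √(a ^ 2 + b ^ 2) * lenl b ta tb
      = C * (1 / C) * (√(a ^ 2 + b ^ 2) * lenl b ta tb) := by field_simp
    _ ≤ C * sinAlpha a b ta tb * (√(a ^ 2 + b ^ 2) * lenl b ta tb) := by gcongr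

lemma sqrt_le_diam_quadK (a b ta tb : ℝ) : √(a ^ 2 + b ^ 2) ≤ Metric.diam (quadK a b ta tb) := by
  have hbdd : Bornology.IsBounded (quadK a b ta tb) := by
    rw [quadK, isBounded_convexHull]
    exact (Set.toFinite _).isBounded
  have hdist : dist (pt2 a 0) (pt2 0 b) = √(a ^ 2 + b ^ 2) := by
    simp [EuclideanSpace.dist_eq, pt2, Fin.sum_univ_two, Real.dist_eq]
  rw [← hdist]
  exact Metric.dist_le_diam_of_mem hbdd (subset_convexHull ℝ _ (by simp))
    (subset_convexHull ℝ _ (by simp))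

lemma setIntegral_unitSquare_rpow_neg_le {c₁ c₂ q : ℝ} (hc₁ : c₁ ≤ 0) (hc₂ : c₂ ≤ 0)
    (hpos : 0 < 1 + c₁ + c₂) (hq : 0 ≤ q) :
    ∫ z in Set.Icc (0 : ℝ) 1 ×ˢ Set.Icc (0 : ℝ) 1, (1 + z.1 * c₁ + z.2 * c₂) ^ (-q) ≤
      (1 + c₁ + c₂) ^ (-q) := by
  have hvol : volume (Set.Icc (0 : ℝ) 1 ×ˢ Set.Icc (0 : ℝ) 1) = 1 := by
    rw [Measure.volume_eq_prod, Measure.prod_prod]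
    simp
  have hbound : ∀ z ∈ Set.Icc (0 : ℝ) 1 ×ˢ Set.Icc (0 : ℝ) 1,
      ‖(1 + z.1 * c₁ + z.2 * c₂) ^ (-q)‖ ≤ (1 + c₁ + c₂) ^ (-q) := by
    rintro ⟨x, y⟩ ⟨⟨hx₀, hx₁⟩, ⟨hy₀, hy₁⟩⟩
    have hbase : 1 + c₁ + c₂ ≤ 1 + x * c₁ + y * c₂ := by nlinarith
    rw [Real.norm_eq_abs, abs_of_nonneg (Real.rpow_nonneg (hpos.le.trans hbase) _)]
    exact Real.rpow_le_rpow_of_nonpos hpos hbase (neg_nonpos.2 hq)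
  have h := norm_setIntegral_le_of_norm_le_const (hvol ▸ ENNReal.one_lt_top) hbound
  rw [measureReal_def, hvol, ENNReal.toReal_one, mul_one] at h
  exact (le_abs_self _).trans h

lemma Ip_le_rpow_neg {p a b ta tb : ℝ} (hp : 1 ≤ p) (ha : 0 < a) (hb : 0 < b)
    (hconv : 1 < ta / a + tb / b) (hta : ta ≤ a) (htb : tb ≤ b) :
    Ip p a b ta tb ≤ (ta / a + tb / b - 1) ^ (-(p - 1)) := by
  rw [show ta / a + tb / b - 1 = 1 + (tb / b - 1) + (ta / a - 1) by ring]
  exact setIntegral_unitSquare_rpow_neg_le (sub_nonpos.2 (div_le_one_of_le₀ htb hb.le))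
    (sub_nonpos.2 (div_le_one_of_le₀ hta ha.le)) (by linarith) (sub_nonneg.2 hp)

lemma max_div_rpow_mul_rpow_le {a b N q : ℝ} (ha : 0 < a) (hb : 0 < b) (haN : a ≤ N) (hbN : b ≤ N)
    (hq : 0 ≤ q) : max (a / b ^ q) (b / a ^ q) * (a * b) ^ q ≤ N * N ^ q := by
  have key : ∀ x y : ℝ, 0 < x → 0 < y → x ≤ N → x / y ^ q * (x * y) ^ q ≤ N * N ^ q := by
    intro x y hx hy hxN
    rw [Real.mul_rpow hx.le hy.le, div_mul_eq_mul_div, ← mul_assoc,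
      mul_div_cancel_right₀ _ (Real.rpow_pos_of_pos hy q).ne']
    exact mul_le_mul hxN (Real.rpow_le_rpow hx.le hxN hq) (by positivity) (hx.le.trans hxN)
  rw [max_mul_of_nonneg _ _ (by positivity)]
  exact max_le (key a b ha hb haN) (mul_comm a b ▸ key b a hb ha hbN)

lemma max_div_rpow_mul_rpow_neg_le {a b s N M C q : ℝ} (ha : 0 < a) (hb : 0 < b) (hM : 0 < M)
    (hC : 0 < C) (haN : a ≤ N) (hbN : b ≤ N) (hq : 0 ≤ q) (hNM : N * M ≤ C * (a * b * s)) :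
    max (a / b ^ q) (b / a ^ q) * s ^ (-q) ≤ C ^ q * (N / M ^ q) := by
  have hN : 0 < N := ha.trans_le haN
  have hs : 0 < s := pos_of_mul_pos_right
    (pos_of_mul_pos_right ((mul_pos hN hM).trans_le hNM) hC.le) (mul_pos ha hb).le
  have hs_inv : s ^ (-q) ≤ (C * (a * b) / (N * M)) ^ q := by
    rw [← inv_div (N * M), Real.inv_rpow (by positivity), ← Real.rpow_neg (by positivity)]
    refine Real.rpow_le_rpow_of_nonpos (by positivity) ?_ (neg_nonpos.2 hq)
    rw [div_le_iff₀ (by positivity)]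
    linarith
  calc max (a / b ^ q) (b / a ^ q) * s ^ (-q)
      ≤ max (a / b ^ q) (b / a ^ q) * (C * (a * b) / (N * M)) ^ q := by gcongr
    _ = max (a / b ^ q) (b / a ^ q) * (a * b) ^ q * (C ^ q / (N ^ q * M ^ q)) := by
        rw [Real.div_rpow (by positivity) (by positivity), Real.mul_rpow hC.le (by positivity),
          Real.mul_rpow hN.le hM.le]
        ring
    _ ≤ N * N ^ q * (C ^ q / (N ^ q * M ^ q)) := by
        gcongr ?_ * _
        exact max_div_rpow_mul_rpow_le ha hb haN hbN hq
    _ = C ^ q * (N / M ^ q) := by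
        field_simp [(Real.rpow_pos_of_pos hN q).ne']

/-- For any `p ≥ 1` and convex elements `K(a,b,ta,tb)` under conditions (D1) and (D2)
with constant `C`: `max{a/b^{p-1}, b/a^{p-1}} · I_p ≤ C' · h / |l|^{p-1}`. -/
theorem Ip_bound_of_D1_D2 (C p : ℝ) (hC : 0 < C) (hp1 : 1 ≤ p) :
    ∃ C' : ℝ, 0 < C' ∧
      ∀ a b ta tb : ℝ, 0 < a → 0 < b → 0 < ta → 0 < tb →
        1 < ta / a + tb / b →
        ta ≤ a → tb ≤ b →
        1 / C ≤ sinAlpha a b ta tb →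
        max (a / b ^ (p - 1)) (b / a ^ (p - 1)) * Ip p a b ta tb ≤
          C' * (Metric.diam (quadK a b ta tb) / lenl b ta tb ^ (p - 1)) := by
  refine ⟨C ^ (p - 1), Real.rpow_pos_of_pos hC _, ?_⟩
  intro a b ta tb ha hb hta htb hconv hD1a hD1b hD2
  have hM : 0 < lenl b ta tb := Real.sqrt_pos.2 (by positivity)
  calc max (a / b ^ (p - 1)) (b / a ^ (p - 1)) * Ip p a b ta tb
      ≤ max (a / b ^ (p - 1)) (b / a ^ (p - 1)) * (ta / a + tb / b - 1) ^ (-(p - 1)) := by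
        gcongr
        exact Ip_le_rpow_neg hp1 ha hb hconv hD1a hD1b
    _ ≤ C ^ (p - 1) * (√(a ^ 2 + b ^ 2) / lenl b ta tb ^ (p - 1)) :=
        max_div_rpow_mul_rpow_neg_le ha hb hM hC
          (Real.le_sqrt_of_sq_le (le_add_of_nonneg_right (sq_nonneg b)))
          (Real.le_sqrt_of_sq_le (le_add_of_nonneg_left (sq_nonneg a))) (sub_nonneg.2 hp1)
          (sqrt_mul_lenl_le_of_inv_le_sinAlpha hC ha hb hconv hD2)
    _ ≤ C ^ (p - 1) * (Metric.diam (quadK a b ta tb) / lenl b ta tb ^ (p - 1)) := by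
        gcongr
        exact sqrt_le_diam_quadK a b ta tb
end
end

section
/- Let k ≥ 0 be an integer and C > 0. There exists a constant C' > 0 depending only on k and C such that for every convex element K(a,b,ã,b̃) satisfying condition (Δ1) with constant C, every p ≥ 1, and every real polynomial q in two variables of total degree ≤ k: ( ∫_{K(a,b,ã,b̃)} |q|^p )^{1/p} ≤ C' · ( ∫_{T(a,b)} |q|^p )^{1/p}, where T(a,b) ⊆ K(a,b,ã,b̃) is the triangle with vertices (0,0), (a,0), (0,b). -/
/-!
The diagonal map `(x, y) ↦ (a x, b y)` carries `T(1,1)` onto `T(a,b)` and `K(1,1,ã/a,b̃/b)` onto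
`K(a,b,ã,b̃)`, multiplies both integrals by the same Jacobian and preserves the degree of `q`, so
it suffices to take `a = b = 1`. Then (Δ1) puts `K` inside a fixed ball `B`. A polynomial vanishing
on the interior of `T` is zero, so `q ↦ ∫_T |q|` is a norm on the finite-dimensional space of
polynomials of degree `≤ k` and therefore dominates `sup_B |q|`. Finally, uniformly in `p ≥ 1`,
`‖q‖_{L^p(K)} ≤ max 1 |B| · sup_B |q|` and `∫_T |q| ≤ (|T| + 1) ‖q‖_{L^p(T)}`.
-/

noncomputable section

/-- The triangle `T(a,b)` with vertices `(0,0), (a,0), (0,b)`. -/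
def triT (a b : ℝ) : Set E2 := convexHull ℝ {pt2 0 0, pt2 a 0, pt2 0 b}

/-- A two-variable polynomial as a function on the plane. -/
def evalPoly (q : MvPolynomial (Fin 2) ℝ) (X : E2) : ℝ :=
  MvPolynomial.eval (fun t => X t) q

open MeasureTheory MvPolynomial Set

lemma le_one_add_rpow {r p : ℝ} (hr : 0 ≤ r) (hp : 1 ≤ p) : r ≤ 1 + r ^ p := by
  rcases le_total r 1 with h | h
  · linarith [Real.rpow_nonneg hr p]
  · linarith [Real.self_le_rpow_of_one_le h hp]

lemma rpow_one_div_le_max_one {V p : ℝ} (hV : 0 ≤ V) (hp : 1 ≤ p) : V ^ (1 / p) ≤ max 1 V :=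
  calc V ^ (1 / p) ≤ max 1 V ^ (1 / p) :=
        Real.rpow_le_rpow hV (le_max_right _ _) (by positivity)
    _ ≤ max 1 V ^ (1 : ℝ) :=
        Real.rpow_le_rpow_of_exponent_le (le_max_left _ _) (div_le_one_of_le₀ hp (by positivity))
    _ = max 1 V := Real.rpow_one _

section Lp

variable {α : Type*} [MeasurableSpace α] {μ : Measure α} {p : ℝ}

lemma integral_le_mul_integral_rpow_one_div [IsFiniteMeasure μ] {g : α → ℝ} (hp : 1 ≤ p)
    (hg0 : 0 ≤ g) (hg : Integrable g μ) (hgp : Integrable (fun x => g x ^ p) μ) :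
    ∫ x, g x ∂μ ≤ (μ.real univ + 1) * (∫ x, g x ^ p ∂μ) ^ (1 / p) := by
  have hp0 : 0 < p := by linarith
  have hI : 0 ≤ ∫ x, g x ^ p ∂μ := integral_nonneg fun x => Real.rpow_nonneg (hg0 x) p
  rcases hI.eq_or_lt with hI0 | hIpos
  · have hgp0 : (fun x => g x ^ p) =ᵐ[μ] 0 :=
      (integral_eq_zero_iff_of_nonneg (fun x => Real.rpow_nonneg (hg0 x) p) hgp).mp hI0.symm
    have hg0' : g =ᵐ[μ] 0 := hgp0.mono fun x hx =>
      (Real.rpow_eq_zero (hg0 x) hp0.ne').mp hx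
    rw [integral_eq_zero_of_ae hg0', ← hI0, Real.zero_rpow (by positivity), mul_zero]
  -- normalise by `r = ‖g‖ₚ` and integrate `g / r ≤ 1 + (g / r) ^ p`
  set r := (∫ x, g x ^ p ∂μ) ^ (1 / p) with hr
  have hrpos : 0 < r := Real.rpow_pos_of_pos hIpos _
  have hrp : r ^ p = ∫ x, g x ^ p ∂μ := by
    rw [hr, ← Real.rpow_mul hI, one_div_mul_cancel hp0.ne', Real.rpow_one]
  have hdiv : ∀ x, (g x / r) ^ p = g x ^ p / r ^ p := fun x =>
    Real.div_rpow (hg0 x) hrpos.le p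
  have hnorm : ∫ x, (g x / r) ^ p ∂μ = 1 := by
    simp only [hdiv, integral_div, hrp, div_self hIpos.ne']
  have hint : Integrable (fun x => (g x / r) ^ p) μ := by
    simpa only [hdiv] using hgp.div_const (r ^ p)
  have hmono : ∫ x, g x / r ∂μ ≤ ∫ x, (1 + (g x / r) ^ p) ∂μ :=
    integral_mono (hg.div_const r) ((integrable_const 1).add hint)
      fun x => le_one_add_rpow (div_nonneg (hg0 x) hrpos.le) hp
  rw [integral_div, integral_add (integrable_const 1) hint, hnorm, integral_const,
    smul_eq_mul, mul_one, div_le_iff₀ hrpos] at hmono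
  exact hmono

lemma rpow_setIntegral_rpow_le_mul_max_one {f : α → ℝ} {s : Set α} {c : ℝ} (hp : 1 ≤ p)
    (hs : μ s < ⊤) (hc : 0 ≤ c) (hf : ∀ x ∈ s, |f x| ≤ c) :
    (∫ x in s, |f x| ^ p ∂μ) ^ (1 / p) ≤ c * max 1 (μ.real s) := by
  have hp0 : 0 < p := by linarith
  have hint : ∫ x in s, |f x| ^ p ∂μ ≤ c ^ p * μ.real s := by
    refine (Real.le_norm_self _).trans (norm_setIntegral_le_of_norm_le_const hs fun x hx => ?_)
    rw [Real.norm_eq_abs, abs_of_nonneg (Real.rpow_nonneg (abs_nonneg _) _)]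
    exact Real.rpow_le_rpow (abs_nonneg _) (hf x hx) hp0.le
  calc (∫ x in s, |f x| ^ p ∂μ) ^ (1 / p) ≤ (c ^ p * μ.real s) ^ (1 / p) :=
        Real.rpow_le_rpow (integral_nonneg fun x => Real.rpow_nonneg (abs_nonneg _) _) hint
          (by positivity)
    _ = c * μ.real s ^ (1 / p) := by
        rw [Real.mul_rpow (by positivity) measureReal_nonneg, ← Real.rpow_mul hc,
          mul_one_div_cancel hp0.ne', Real.rpow_one]
    _ ≤ c * max 1 (μ.real s) :=
        mul_le_mul_of_nonneg_left (rpow_one_div_le_max_one measureReal_nonneg hp) hc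

end Lp

lemma LinearMap.exists_bound_of_seminorm_of_finiteDimensional {V W : Type*} [AddCommGroup V]
    [Module ℝ V] [FiniteDimensional ℝ V] [NormedAddCommGroup W] [NormedSpace ℝ W]
    (N : Seminorm ℝ V) (hN : ∀ v, N v = 0 → v = 0) (L : V →ₗ[ℝ] W) :
    ∃ M, 0 < M ∧ ∀ v, ‖L v‖ ≤ M * N v := by
  let _ : NormedAddCommGroup V :=
    AddGroupNorm.toNormedAddCommGroup { N.toAddGroupSeminorm with eq_zero_of_map_eq_zero' := hN }
  let _ : NormedSpace ℝ V := ⟨fun c v => (map_smul_eq_mul N c v).le⟩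
  exact SemilinearMapClass.bound_of_continuous L L.continuous_of_finiteDimensional

lemma setIntegral_image_linearMap {E F : Type*} [NormedAddCommGroup E] [NormedSpace ℝ E]
    [FiniteDimensional ℝ E] [MeasurableSpace E] [BorelSpace E] [NormedAddCommGroup F]
    [NormedSpace ℝ F] (μ : Measure E) [μ.IsAddHaarMeasure] {L : E →ₗ[ℝ] E}
    (hL : Function.Injective L) {s : Set E} (hs : MeasurableSet s) (g : E → F) :
    ∫ x in L '' s, g x ∂μ = |LinearMap.det L| • ∫ x in s, g (L x) ∂μ := by
  rw [integral_image_eq_integral_abs_det_fderiv_smul μ hs (f := L)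
    (fun x _ => (LinearMap.toContinuousLinearMap L).hasFDerivWithinAt) hL.injOn, integral_smul]
  simp

lemma continuous_evalPoly (q : MvPolynomial (Fin 2) ℝ) : Continuous (evalPoly q) :=
  (continuous_eval q).comp (continuous_pi fun t => (EuclideanSpace.proj t).continuous)

lemma analyticOnNhd_evalPoly (q : MvPolynomial (Fin 2) ℝ) :
    AnalyticOnNhd ℝ (evalPoly q) univ :=
  AnalyticOnNhd.eval_linearMap (WithLp.linearEquiv 2 ℝ (Fin 2 → ℝ)).toLinearMap q

lemma eq_zero_of_evalPoly_eqOn_zero {q : MvPolynomial (Fin 2) ℝ} {U : Set E2} (hU : IsOpen U)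
    (hne : U.Nonempty) (h : EqOn (evalPoly q) 0 U) : q = 0 := by
  obtain ⟨z, hz⟩ := hne
  have hzero : EqOn (evalPoly q) 0 univ :=
    (analyticOnNhd_evalPoly q).eqOn_zero_of_preconnected_of_eventuallyEq_zero
      isPreconnected_univ (mem_univ z) (Filter.eventuallyEq_of_mem (hU.mem_nhds hz) h)
  exact MvPolynomial.funext fun x => hzero (mem_univ (WithLp.toLp 2 x))

lemma eq_zero_of_setIntegral_abs_evalPoly_eq_zero {q : MvPolynomial (Fin 2) ℝ} {s : Set E2}
    (hs : IsCompact s) (hs' : (interior s).Nonempty)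
    (h : ∫ X in s, |evalPoly q X| = 0) : q = 0 := by
  have hae : (fun X => |evalPoly q X|) =ᵐ[volume.restrict s] 0 :=
    (integral_eq_zero_iff_of_nonneg (fun _ => abs_nonneg _)
      ((continuous_evalPoly q).abs.continuousOn.integrableOn_compact hs)).mp h
  have hint : EqOn (fun X => |evalPoly q X|) 0 (interior s) :=
    Measure.eqOn_open_of_ae_eq (ae_restrict_of_ae_restrict_of_subset interior_subset hae)
      isOpen_interior (continuous_evalPoly q).abs.continuousOn continuousOn_const
  exact eq_zero_of_evalPoly_eqOn_zero isOpen_interior hs' fun X hX => abs_eq_zero.mp (hint hX)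

def l1SeminormOn {s : Set E2} (hs : IsCompact s) : Seminorm ℝ (MvPolynomial (Fin 2) ℝ) :=
  Seminorm.of (fun q => ∫ X in s, |evalPoly q X|)
    (fun q r => by
      have hint : ∀ q, IntegrableOn (fun X => |evalPoly q X|) s :=
        fun q => (continuous_evalPoly q).abs.continuousOn.integrableOn_compact hs
      rw [← integral_add (hint q) (hint r)]
      exact setIntegral_mono (hint _) ((hint q).add (hint r))
        fun X => by simpa [evalPoly] using abs_add_le _ _)
    (fun c q => by simp [evalPoly, abs_mul, integral_const_mul])

lemma exists_abs_evalPoly_le_mul_l1SeminormOn (k : ℕ) {s S : Set E2} (hs : IsCompact s)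
    (hs' : (interior s).Nonempty) (hS : IsCompact S) :
    ∃ M, 0 < M ∧ ∀ q : MvPolynomial (Fin 2) ℝ, q.totalDegree ≤ k →
      ∀ X ∈ S, |evalPoly q X| ≤ M * l1SeminormOn hs q := by
  let P := restrictTotalDegree (Fin 2) ℝ k
  have : CompactSpace S := isCompact_iff_compactSpace.mp hS
  let evalOnS : P →ₗ[ℝ] C(S, ℝ) :=
    { toFun := fun q =>
        ⟨fun X => evalPoly q X, (continuous_evalPoly q).comp continuous_subtype_val⟩
      map_add' := fun q r => by ext; simp [evalPoly]
      map_smul' := fun c q => by ext; simp [evalPoly] }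
  obtain ⟨M, hM, hbound⟩ := evalOnS.exists_bound_of_seminorm_of_finiteDimensional
    ((l1SeminormOn hs).comp P.subtype)
    fun q hq => Subtype.ext (eq_zero_of_setIntegral_abs_evalPoly_eq_zero hs hs' hq)
  refine ⟨M, hM, fun q hq X hX => ?_⟩
  let q' : P := ⟨q, (mem_restrictTotalDegree _ _ _).mpr hq⟩
  calc |evalPoly q X| = ‖evalOnS q' ⟨X, hX⟩‖ := rfl
    _ ≤ ‖evalOnS q'‖ := (evalOnS q').norm_coe_le_norm _
    _ ≤ M * l1SeminormOn hs q := hbound q'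

lemma isCompact_triT (a b : ℝ) : IsCompact (triT a b) :=
  (toFinite _).isCompact_convexHull ℝ

lemma isCompact_quadK (a b ta tb : ℝ) : IsCompact (quadK a b ta tb) :=
  (toFinite _).isCompact_convexHull ℝ

lemma pt2_mem_triT_one_one {x y : ℝ} (hx : 0 ≤ x) (hy : 0 ≤ y) (hxy : x + y ≤ 1) :
    pt2 x y ∈ triT 1 1 := by
  have := (convex_convexHull ℝ {pt2 0 0, pt2 1 0, pt2 0 1}).sum_mem (t := Finset.univ)
    (w := ![1 - x - y, x, y]) (z := ![pt2 0 0, pt2 1 0, pt2 0 1])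
    (fun i _ => by fin_cases i <;> simp <;> linarith) (by simp [Fin.sum_univ_three]; ring)
    (fun i _ => subset_convexHull ℝ _ (by fin_cases i <;> simp))
  have hcomb : pt2 x y = ∑ i, ![1 - x - y, x, y] i • ![pt2 0 0, pt2 1 0, pt2 0 1] i := by
    ext i; fin_cases i <;> simp [pt2, Fin.sum_univ_three]
  rwa [triT, hcomb]

lemma interior_triT_one_one_nonempty : (interior (triT 1 1)).Nonempty := by
  let U : Set E2 := {X | 0 < X 0 ∧ 0 < X 1 ∧ X 0 + X 1 < 1}
  have hU : IsOpen U := by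
    have c0 : Continuous fun X : E2 => X 0 := (EuclideanSpace.proj 0).continuous
    have c1 : Continuous fun X : E2 => X 1 := (EuclideanSpace.proj 1).continuous
    exact (isOpen_lt continuous_const c0).inter
      ((isOpen_lt continuous_const c1).inter (isOpen_lt (c0.add c1) continuous_const))
  have hUT : U ⊆ triT 1 1 := fun X ⟨h0, h1, h01⟩ => by
    convert pt2_mem_triT_one_one h0.le h1.le h01.le
    ext i; fin_cases i <;> rfl
  exact ⟨pt2 (1 / 4) (1 / 4), interior_maximal hUT hU (by norm_num [U, pt2])⟩

lemma norm_pt2_le (x y : ℝ) : ‖pt2 x y‖ ≤ |x| + |y| := by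
  rw [EuclideanSpace.norm_eq, Real.sqrt_le_left (by positivity)]
  simp only [pt2, Real.norm_eq_abs, sq_abs, Fin.sum_univ_two, Matrix.cons_val_zero,
    Matrix.cons_val_one, Matrix.cons_val_fin_one]
  nlinarith [abs_nonneg x, abs_nonneg y, sq_abs x, sq_abs y]

lemma quadK_one_one_subset_closedBall {ta tb c : ℝ} (hta : 0 ≤ ta) (htb : 0 ≤ tb)
    (htac : ta ≤ c) (htbc : tb ≤ c) : quadK 1 1 ta tb ⊆ Metric.closedBall 0 (1 + 2 * c) := by
  refine convexHull_min ?_ (convex_closedBall _ _)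
  have hball : ∀ x y, |x| + |y| ≤ 1 + 2 * c → pt2 x y ∈ Metric.closedBall 0 (1 + 2 * c) :=
    fun x y h => mem_closedBall_zero_iff.mpr ((norm_pt2_le x y).trans h)
  rintro X (rfl | rfl | rfl | rfl) <;> apply hball <;>
    simp only [abs_zero, abs_one, abs_of_nonneg hta, abs_of_nonneg htb] <;> linarith

lemma exists_rpow_integral_quadK_le_triT_one_one (k : ℕ) (c : ℝ) :
    ∃ C' : ℝ, 0 < C' ∧ ∀ ta tb : ℝ, 0 ≤ ta → 0 ≤ tb → ta ≤ c → tb ≤ c →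
      ∀ p : ℝ, 1 ≤ p → ∀ q : MvPolynomial (Fin 2) ℝ, q.totalDegree ≤ k →
        (∫ X in quadK 1 1 ta tb, |evalPoly q X| ^ p) ^ (1 / p) ≤
          C' * (∫ X in triT 1 1, |evalPoly q X| ^ p) ^ (1 / p) := by
  set B := Metric.closedBall (0 : E2) (1 + 2 * c)
  obtain ⟨M, hM, hsup⟩ := exists_abs_evalPoly_le_mul_l1SeminormOn k (isCompact_triT 1 1)
    interior_triT_one_one_nonempty (isCompact_closedBall 0 (1 + 2 * c))
  refine ⟨M * (volume.real (triT 1 1) + 1) * max 1 (volume.real B), by positivity, ?_⟩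
  intro ta tb hta htb htac htbc p hp q hq
  have hKB := quadK_one_one_subset_closedBall hta htb htac htbc
  have hK : (∫ X in quadK 1 1 ta tb, |evalPoly q X| ^ p) ^ (1 / p) ≤
      M * l1SeminormOn (isCompact_triT 1 1) q * max 1 (volume.real B) :=
    (rpow_setIntegral_rpow_le_mul_max_one hp (isCompact_quadK 1 1 ta tb).measure_lt_top
      (by positivity) fun X hX => hsup q hq X (hKB hX)).trans
      (mul_le_mul_of_nonneg_left
        (max_le_max le_rfl (measureReal_mono hKB measure_closedBall_lt_top.ne)) (by positivity))
  have hT : l1SeminormOn (isCompact_triT 1 1) q ≤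
      (volume.real (triT 1 1) + 1) * (∫ X in triT 1 1, |evalPoly q X| ^ p) ^ (1 / p) := by
    have : IsFiniteMeasure (volume.restrict (triT 1 1)) :=
      isFiniteMeasure_restrict.mpr (isCompact_triT 1 1).measure_lt_top.ne
    have hcont := (continuous_evalPoly q).abs
    have hL1 := integral_le_mul_integral_rpow_one_div (μ := volume.restrict (triT 1 1)) hp
      (fun X => abs_nonneg (evalPoly q X))
      (hcont.continuousOn.integrableOn_compact (isCompact_triT 1 1))
      ((hcont.rpow_const fun _ => Or.inr (by linarith)).continuousOn.integrableOn_compact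
        (isCompact_triT 1 1))
    rwa [measureReal_restrict_apply_univ] at hL1
  calc _ ≤ M * l1SeminormOn (isCompact_triT 1 1) q * max 1 (volume.real B) := hK
    _ ≤ M * ((volume.real (triT 1 1) + 1) * (∫ X in triT 1 1, |evalPoly q X| ^ p) ^ (1 / p)) *
          max 1 (volume.real B) := by gcongr
    _ = _ := by ring

def diagScale (a b : ℝ) : E2 →ₗ[ℝ] E2 where
  toFun X := pt2 (a * X 0) (b * X 1)
  map_add' X Y := by ext i; fin_cases i <;> simp [pt2, mul_add]
  map_smul' c X := by ext i; fin_cases i <;> simp [pt2, mul_left_comm]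

lemma diagScale_pt2 (a b x y : ℝ) : diagScale a b (pt2 x y) = pt2 (a * x) (b * y) := by
  ext i; fin_cases i <;> simp [diagScale, pt2]

lemma diagScale_injective {a b : ℝ} (ha : a ≠ 0) (hb : b ≠ 0) :
    Function.Injective (diagScale a b) := by
  intro X Y h
  have h0 := congrArg (fun Z : E2 => Z 0) h
  have h1 := congrArg (fun Z : E2 => Z 1) h
  simp only [diagScale, pt2, LinearMap.coe_mk, AddHom.coe_mk] at h0 h1
  ext i; fin_cases i
  · simpa [ha] using h0
  · simpa [hb] using h1

lemma diagScale_image_quadK {a b : ℝ} (ha : a ≠ 0) (hb : b ≠ 0) (ta tb : ℝ) :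
    diagScale a b '' quadK 1 1 (ta / a) (tb / b) = quadK a b ta tb := by
  simp [quadK, LinearMap.image_convexHull, image_insert_eq, diagScale_pt2,
    mul_div_cancel₀ _ ha, mul_div_cancel₀ _ hb]

lemma diagScale_image_triT (a b : ℝ) : diagScale a b '' triT 1 1 = triT a b := by
  simp [triT, LinearMap.image_convexHull, image_insert_eq, diagScale_pt2]

def scalePoly (a b : ℝ) (q : MvPolynomial (Fin 2) ℝ) : MvPolynomial (Fin 2) ℝ :=
  ∑ d ∈ q.support, monomial d (q.coeff d * (a ^ d 0 * b ^ d 1))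

lemma totalDegree_scalePoly_le (a b : ℝ) (q : MvPolynomial (Fin 2) ℝ) :
    (scalePoly a b q).totalDegree ≤ q.totalDegree :=
  (totalDegree_finsetSum _ _).trans <| Finset.sup_le fun _ hd =>
    (totalDegree_monomial_le _ _).trans (le_totalDegree hd)

lemma evalPoly_diagScale (a b : ℝ) (q : MvPolynomial (Fin 2) ℝ) (X : E2) :
    evalPoly q (diagScale a b X) = evalPoly (scalePoly a b q) X := by
  rw [evalPoly, evalPoly, scalePoly, map_sum, eval_eq']
  refine Finset.sum_congr rfl fun d _ => ?_
  rw [eval_monomial, Finsupp.prod_fintype _ _ fun _ => pow_zero _, Fin.prod_univ_two,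
    Fin.prod_univ_two]
  simp only [diagScale, pt2, LinearMap.coe_mk, AddHom.coe_mk, Matrix.cons_val_zero,
    Matrix.cons_val_one, Matrix.cons_val_fin_one, mul_pow]
  ring

theorem poly_norm_K_le_T_general (k : ℕ) (C : ℝ) :
    ∃ C' : ℝ, 0 < C' ∧
      ∀ a b ta tb : ℝ, 0 < a → 0 < b → 0 < ta → 0 < tb →
        1 < ta / a + tb / b →
        ta / a ≤ C → tb / b ≤ C →
        ∀ p : ℝ, 1 ≤ p →
        ∀ q : MvPolynomial (Fin 2) ℝ, q.totalDegree ≤ k →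
          (∫ X in quadK a b ta tb, |evalPoly q X| ^ p) ^ (1 / p) ≤
            C' * (∫ X in triT a b, |evalPoly q X| ^ p) ^ (1 / p) := by
  obtain ⟨C', hC', hunit⟩ := exists_rpow_integral_quadK_le_triT_one_one k C
  refine ⟨C', hC', fun a b ta tb ha hb hta htb _ htaC htbC p hp q hq => ?_⟩
  set J := |LinearMap.det (diagScale a b)|
  have hscale : ∀ s : Set E2, IsCompact s → ∫ X in diagScale a b '' s, |evalPoly q X| ^ p =
      J * ∫ X in s, |evalPoly (scalePoly a b q) X| ^ p := fun s hs => by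
    simp only [setIntegral_image_linearMap volume (diagScale_injective ha.ne' hb.ne')
      hs.measurableSet, evalPoly_diagScale, smul_eq_mul, J]
  have hnonneg : ∀ s : Set E2, 0 ≤ ∫ X in s, |evalPoly (scalePoly a b q) X| ^ p := fun s =>
    integral_nonneg fun X => Real.rpow_nonneg (abs_nonneg _) p
  rw [← diagScale_image_quadK ha.ne' hb.ne', ← diagScale_image_triT,
    hscale _ (isCompact_quadK ..), hscale _ (isCompact_triT 1 1),
    Real.mul_rpow (abs_nonneg _) (hnonneg _),
    Real.mul_rpow (abs_nonneg _) (hnonneg _), mul_left_comm]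
  exact mul_le_mul_of_nonneg_left (hunit _ _ (div_pos hta ha).le (div_pos htb hb).le htaC htbC
    p hp _ ((totalDegree_scalePoly_le a b q).trans hq)) (by positivity)

/-- Comparison of `L^p` norms of polynomials of total degree `≤ k` on a convex element
`K(a,b,ta,tb)` under (Δ1) and on the triangle `T(a,b)`:
`‖q‖_{0,p,K} ≤ C'·‖q‖_{0,p,T}` with `C' = C'(k, C)`. -/
theorem poly_norm_K_le_T (k : ℕ) (C : ℝ) (hC : 0 < C) :
    ∃ C' : ℝ, 0 < C' ∧
      ∀ a b ta tb : ℝ, 0 < a → 0 < b → 0 < ta → 0 < tb →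
        1 < ta / a + tb / b →
        ta / a ≤ C → tb / b ≤ C →
        ∀ p : ℝ, 1 ≤ p →
        ∀ q : MvPolynomial (Fin 2) ℝ, q.totalDegree ≤ k →
          (∫ X in quadK a b ta tb, |evalPoly q X| ^ p) ^ (1 / p) ≤
            C' * (∫ X in triT a b, |evalPoly q X| ^ p) ^ (1 / p) :=
  poly_norm_K_le_T_general k C
end
end

section
/- For every p ≥ 1 there exists a constant c > 0 (depending only on p) such that for all 0 < s < 1/2: ∫₀¹∫₀¹ ( 2⁴ · x̂ · | (s−1)·ŷ·(x̂−ŷ) + (1−x̂)·(1−2ŷ) | )^p / ( s^{p−1} · (1 + x̂ + (s−1)·ŷ)^{p−1} ) dx̂ dŷ ≥ c · s^{1−p}. (This integral equals ‖∂φ_{11}/∂y‖_{0,p,K}^p for the basis function φ_{11} of the Q₂ element on K = K(1,s,s,2s), and the lower bound shows this quantity blows up as s → 0, yielding the counterexample to the W^{1,p} error estimate under the regular decomposition property alone.) -/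
/-!
On the sub-rectangle `[7/8, 1] × [1/2, 5/8]` of the unit square the term `(s - 1) ŷ (x̂ - ŷ)`
dominates, so the absolute value is at least `1/16` and the numerator base is at least `7/8`,
while the denominator base `1 + x̂ + (s - 1) ŷ` is at most `2`. The integrand is therefore at
least `(7/8)^p / (2^(p-1) s^(p-1))` there, and since it is nonnegative on the whole square, the
integral is at least `1/64` of this bound.
-/

noncomputable section

open MeasureTheory Set

theorem mul_measureReal_le_setIntegral_of_subset {α : Type*} [MeasurableSpace α]
    {μ : Measure α} {f : α → ℝ} {s t : Set α} {c : ℝ} (hf : IntegrableOn f s μ)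
    (hs : MeasurableSet s) (hf_nonneg : ∀ x ∈ s, 0 ≤ f x) (ht : MeasurableSet t)
    (hts : t ⊆ s) (hμt : μ t ≠ ⊤) (hc : ∀ x ∈ t, c ≤ f x) :
    c * μ.real t ≤ ∫ x in s, f x ∂μ :=
  calc c * μ.real t ≤ ∫ x in t, f x ∂μ :=
        setIntegral_ge_of_const_le_real ht hμt hc (hf.mono_set hts)
    _ ≤ ∫ x in s, f x ∂μ :=
        setIntegral_mono_set hf (ae_restrict_of_forall_mem hs hf_nonneg) hts.eventuallyLE

namespace Q2Counterexample

def unitSquare : Set (ℝ × ℝ) := Icc 0 1 ×ˢ Icc 0 1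

def cornerRect : Set (ℝ × ℝ) := Icc (7 / 8) 1 ×ˢ Icc (1 / 2) (5 / 8)

def numeratorBase (s : ℝ) (z : ℝ × ℝ) : ℝ :=
  (2:ℝ) ^ (4:ℕ) * z.1 * |(s - 1) * z.2 * (z.1 - z.2) + (1 - z.1) * (1 - 2 * z.2)|

def denominatorBase (s : ℝ) (z : ℝ × ℝ) : ℝ := 1 + z.1 + (s - 1) * z.2

def integrand (p s : ℝ) (z : ℝ × ℝ) : ℝ :=
  numeratorBase s z ^ p / (s ^ (p - 1) * denominatorBase s z ^ (p - 1))

theorem cornerRect_subset_unitSquare : cornerRect ⊆ unitSquare := by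
  apply prod_mono <;> apply Icc_subset_Icc <;> norm_num

theorem volume_real_cornerRect : volume.real cornerRect = 1 / 64 := by
  rw [cornerRect, Measure.volume_eq_prod, measureReal_prod_prod,
    Real.volume_real_Icc_of_le (by norm_num), Real.volume_real_Icc_of_le (by norm_num)]
  norm_num

theorem numeratorBase_nonneg (s : ℝ) {z : ℝ × ℝ} (hz : z ∈ unitSquare) :
    0 ≤ numeratorBase s z := by
  have : 0 ≤ z.1 := hz.1.1
  unfold numeratorBase
  positivity

theorem denominatorBase_pos {s : ℝ} (hs : 0 < s) {z : ℝ × ℝ} (hz : z ∈ unitSquare) :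
    0 < denominatorBase s z := by
  obtain ⟨⟨hx0, hx1⟩, hy0, hy1⟩ := hz
  unfold denominatorBase
  rcases le_total s 1 with h | h <;> nlinarith

theorem seven_eighths_le_numeratorBase {s : ℝ} (hs : s ≤ 1 / 2) {z : ℝ × ℝ}
    (hz : z ∈ cornerRect) : 7 / 8 ≤ numeratorBase s z := by
  obtain ⟨⟨hx0, hx1⟩, hy0, hy1⟩ := hz
  set A := (s - 1) * z.2 * (z.1 - z.2) + (1 - z.1) * (1 - 2 * z.2)
  have h_main : 1 / 16 ≤ (1 - s) * z.2 * (z.1 - z.2) := by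
    have : 1 / 4 ≤ (1 - s) * z.2 := by nlinarith
    nlinarith
  have h_rest : (1 - z.1) * (1 - 2 * z.2) ≤ 0 := by nlinarith
  have hA : 1 / 16 ≤ |A| := le_abs.mpr (Or.inr (by linarith))
  show 7 / 8 ≤ (2:ℝ) ^ (4:ℕ) * z.1 * |A|
  nlinarith

theorem denominatorBase_le_two {s : ℝ} (hs : s ≤ 1) {z : ℝ × ℝ} (hz : z ∈ unitSquare) :
    denominatorBase s z ≤ 2 := by
  obtain ⟨⟨hx0, hx1⟩, hy0, hy1⟩ := hz
  unfold denominatorBase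
  nlinarith

theorem integrand_nonneg {p s : ℝ} (hs : 0 < s) {z : ℝ × ℝ} (hz : z ∈ unitSquare) :
    0 ≤ integrand p s z :=
  div_nonneg (Real.rpow_nonneg (numeratorBase_nonneg s hz) p)
    (mul_nonneg (Real.rpow_nonneg hs.le _) (Real.rpow_nonneg (denominatorBase_pos hs hz).le _))

theorem integrableOn_integrand {p s : ℝ} (hp : 0 ≤ p) (hs : 0 < s) :
    IntegrableOn (integrand p s) unitSquare := by
  have h_num : Continuous fun z ↦ numeratorBase s z ^ p :=
    (by unfold numeratorBase; fun_prop : Continuous (numeratorBase s)).rpow_const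
      fun _ ↦ Or.inr hp
  have h_den : ContinuousOn (fun z ↦ s ^ (p - 1) * denominatorBase s z ^ (p - 1)) unitSquare :=
    continuousOn_const.mul <| ContinuousOn.rpow_const
      (by unfold denominatorBase; fun_prop) fun z hz ↦ Or.inl (denominatorBase_pos hs hz).ne'
  refine ContinuousOn.integrableOn_compact (isCompact_Icc.prod isCompact_Icc) ?_
  exact h_num.continuousOn.div h_den fun z hz ↦
    (mul_pos (Real.rpow_pos_of_pos hs _) (Real.rpow_pos_of_pos (denominatorBase_pos hs hz) _)).ne'

theorem integrand_ge_on_cornerRect {p s : ℝ} (hp : 1 ≤ p) (hs : 0 < s) (hs' : s ≤ 1 / 2)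
    {z : ℝ × ℝ} (hz : z ∈ cornerRect) :
    (7 / 8) ^ p / (s ^ (p - 1) * 2 ^ (p - 1)) ≤ integrand p s z := by
  have hz' := cornerRect_subset_unitSquare hz
  have hB := denominatorBase_pos hs hz'
  refine div_le_div₀ (Real.rpow_nonneg (numeratorBase_nonneg s hz') p)
    (Real.rpow_le_rpow (by norm_num) (seven_eighths_le_numeratorBase hs' hz) (by linarith))
    (mul_pos (Real.rpow_pos_of_pos hs _) (Real.rpow_pos_of_pos hB _)) ?_
  gcongr
  exact denominatorBase_le_two (by linarith) hz'

theorem mul_rpow_one_sub_le_setIntegral_integrand {p s : ℝ} (hp : 1 ≤ p) (hs : 0 < s)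
    (hs' : s ≤ 1 / 2) :
    (7 / 8) ^ p / (2 ^ (p - 1) * 64) * s ^ (1 - p) ≤ ∫ z in unitSquare, integrand p s z := by
  have h_rpow : s ^ (1 - p) = (s ^ (p - 1))⁻¹ := by
    rw [show 1 - p = -(p - 1) by ring, Real.rpow_neg hs.le]
  calc (7 / 8) ^ p / (2 ^ (p - 1) * 64) * s ^ (1 - p)
      = (7 / 8) ^ p / (s ^ (p - 1) * 2 ^ (p - 1)) * volume.real cornerRect := by
        rw [volume_real_cornerRect, h_rpow]
        field_simp
    _ ≤ ∫ z in unitSquare, integrand p s z :=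
      mul_measureReal_le_setIntegral_of_subset (integrableOn_integrand (by linarith) hs)
        (measurableSet_Icc.prod measurableSet_Icc) (fun _ ↦ integrand_nonneg hs)
        (measurableSet_Icc.prod measurableSet_Icc) cornerRect_subset_unitSquare
        (isCompact_Icc.prod isCompact_Icc).measure_lt_top.ne
        (fun _ ↦ integrand_ge_on_cornerRect hp hs hs')

end Q2Counterexample

/-- The counterexample integral: for the `Q₂` element on `K(1,s,s,2s)` the quantity
`‖∂φ₁₁/∂y‖_{0,p,K}^p`, expressed as an integral over the unit square, is bounded below
by `c·s^{1−p}`, so it blows up as `s → 0` for `p > 1`. -/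
theorem counterexample_integral_blowup (p : ℝ) (hp : 1 ≤ p) :
    ∃ c : ℝ, 0 < c ∧
      ∀ s : ℝ, 0 < s → s < 1 / 2 →
        c * s ^ (1 - p) ≤
          ∫ z in (Set.Icc (0:ℝ) 1) ×ˢ (Set.Icc (0:ℝ) 1),
            ((2:ℝ) ^ (4:ℕ) * z.1 *
                |(s - 1) * z.2 * (z.1 - z.2) + (1 - z.1) * (1 - 2 * z.2)|) ^ p /
              (s ^ (p - 1) * (1 + z.1 + (s - 1) * z.2) ^ (p - 1)) :=
  ⟨_, by positivity, fun _ hs hs' ↦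
    Q2Counterexample.mul_rpow_one_sub_le_setIntegral_integrand hp hs hs'.le⟩
end
end
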